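/- Let E = {0} ∪ ⋃_{k=1}^∞ [2^{−2k+1}, 2^{−2k+2}] ⊆ ℝ. Then: (1) [0,1] = E ∪ (1/2)·E; (2) E = (1/4)·E ∪ [1/2,1]; (3) E = (1/4)·E ∪ ((1/4)·E + 1/2) ∪ ((1/2)·E + 1/2). In particular E is a self-similar set with respect to the three similarity maps x ↦ x/4, x ↦ x/4 + 1/2, x ↦ x/2 + 1/2. -/

import Mathlib

open Pointwise

/-- `E = {0} ∪ ⋃_{k≥1} [2^{-2k+1}, 2^{-2k+2}] ⊆ ℝ`. -/
def setE : Set ℝ :=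
  insert 0 (⋃ k : ℕ, Set.Icc ((2 : ℝ) ^ (-2 * ((k : ℤ) + 1) + 1)) ((2 : ℝ) ^ (-2 * ((k : ℤ) + 1) + 2)))

/-!
Writing `dyadicShell n = [2^{-(n+1)}, 2^{-n}]`, the set `E` is `0` together with the even shells,
while `[0, 1]` is `0` together with all of them. Scaling by `2⁻¹ ^ m` shifts shell indices by `m`,
so `2⁻¹ • E` collects the odd shells, giving (1), and `4⁻¹ • E` collects the even shells except
`dyadicShell 0 = [1/2, 1]`, giving (2). Mapping (1) under `x ↦ x/2 + 1/2` writes `[1/2, 1]` as the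
union of the last two pieces of (3), which then follows from (2).
-/

open Set

lemma iUnion_Icc_pow_succ_pow {K : Type*} [Field K] [LinearOrder K] [IsStrictOrderedRing K]
    [Archimedean K] {r : K} (h0 : 0 < r) (h1 : r < 1) :
    ⋃ n : ℕ, Icc (r ^ (n + 1)) (r ^ n) = Ioc 0 1 := by
  ext x
  simp only [mem_iUnion, mem_Icc, mem_Ioc]
  constructor
  · rintro ⟨n, hlo, hhi⟩
    exact ⟨(pow_pos h0 _).trans_le hlo, hhi.trans (pow_le_one₀ h0.le h1.le)⟩
  · rintro ⟨hx0, hx1⟩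
    obtain ⟨n, hlo, hhi⟩ := exists_nat_pow_near_of_lt_one hx0 hx1 h0 h1
    exact ⟨n, hlo.le, hhi⟩

lemma iUnion_even_union_iUnion_odd {α : Type*} (u : ℕ → Set α) :
    (⋃ k, u (2 * k)) ∪ ⋃ k, u (2 * k + 1) = ⋃ n, u n := by
  ext x
  simp only [mem_union, mem_iUnion]
  constructor
  · rintro (⟨k, hk⟩ | ⟨k, hk⟩) <;> exact ⟨_, hk⟩
  · rintro ⟨n, hn⟩
    obtain ⟨k, rfl | rfl⟩ := Nat.even_or_odd' n
    exacts [Or.inl ⟨k, hn⟩, Or.inr ⟨k, hn⟩]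

def dyadicShell (n : ℕ) : Set ℝ := Icc (2⁻¹ ^ (n + 1)) (2⁻¹ ^ n)

lemma pow_smul_dyadicShell (m n : ℕ) : (2⁻¹ : ℝ) ^ m • dyadicShell n = dyadicShell (n + m) := by
  rw [dyadicShell, LinearOrderedField.smul_Icc (by positivity), ← pow_add, ← pow_add, dyadicShell,
    add_right_comm, add_comm m, add_comm m]

lemma Icc_zero_one_eq_insert_iUnion_dyadicShell :
    Icc (0 : ℝ) 1 = insert 0 (⋃ n, dyadicShell n) := by
  unfold dyadicShell
  rw [iUnion_Icc_pow_succ_pow (by norm_num) (by norm_num), Ioc_insert_left zero_le_one]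

lemma setE_eq_insert_iUnion_dyadicShell : setE = insert 0 (⋃ k : ℕ, dyadicShell (2 * k)) := by
  have two_zpow_neg (j : ℕ) : (2 : ℝ) ^ (-(j : ℤ)) = 2⁻¹ ^ j := by
    rw [zpow_neg, zpow_natCast, inv_pow]
  have h_shell (k : ℕ) : Icc ((2 : ℝ) ^ (-2 * ((k : ℤ) + 1) + 1)) (2 ^ (-2 * ((k : ℤ) + 1) + 2))
      = dyadicShell (2 * k) := by
    rw [dyadicShell, ← two_zpow_neg, ← two_zpow_neg]
    push_cast
    ring_nf
  simp only [setE, h_shell]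

lemma pow_smul_setE (m : ℕ) :
    (2⁻¹ : ℝ) ^ m • setE = insert 0 (⋃ k : ℕ, dyadicShell (2 * k + m)) := by
  simp_rw [setE_eq_insert_iUnion_dyadicShell, smul_set_insert, smul_zero, smul_set_iUnion,
    pow_smul_dyadicShell]

lemma Icc_zero_one_eq_setE_union_half_smul_setE :
    Icc (0 : ℝ) 1 = setE ∪ (2 : ℝ)⁻¹ • setE := by
  rw [← pow_one (2 : ℝ)⁻¹, pow_smul_setE, setE_eq_insert_iUnion_dyadicShell,
    Icc_zero_one_eq_insert_iUnion_dyadicShell, insert_union, union_insert, insert_idem,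
    iUnion_even_union_iUnion_odd dyadicShell]

lemma setE_eq_quarter_smul_setE_union_Icc :
    setE = (4 : ℝ)⁻¹ • setE ∪ Icc (1 / 2 : ℝ) 1 := by
  have h_quarter : (4 : ℝ)⁻¹ = 2⁻¹ ^ 2 := by norm_num
  have h_shell_zero : Icc (1 / 2 : ℝ) 1 = dyadicShell 0 := by norm_num [dyadicShell]
  rw [h_quarter, pow_smul_setE, h_shell_zero, setE_eq_insert_iUnion_dyadicShell,
    ← union_iUnion_nat_succ, insert_union, union_comm]
  simp_rw [mul_add_one]

lemma image_half_add_half_smul (s : Set ℝ) :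
    (fun x : ℝ => x / 2 + 1 / 2) '' ((2 : ℝ)⁻¹ • s) = (fun x : ℝ => x / 4 + 1 / 2) '' s := by
  rw [← image_smul, image_image]
  congr! 2 with x
  simp only [smul_eq_mul]
  ring

lemma image_half_add_half_Icc_zero_one :
    (fun x : ℝ => x / 2 + 1 / 2) '' Icc 0 1 = Icc (1 / 2) 1 := by
  have h_affine : (fun x : ℝ => x / 2 + 1 / 2) = (2⁻¹ * · + 1 / 2) := by
    funext x; ring
  rw [h_affine, image_affine_Icc' (by norm_num)]
  norm_num

theorem setE_self_similar :
    Set.Icc (0 : ℝ) 1 = setE ∪ (2 : ℝ)⁻¹ • setE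
    ∧ setE = (4 : ℝ)⁻¹ • setE ∪ Set.Icc (1 / 2 : ℝ) 1
    ∧ setE = (fun x : ℝ => x / 4) '' setE ∪ (fun x : ℝ => x / 4 + 1 / 2) '' setE
        ∪ (fun x : ℝ => x / 2 + 1 / 2) '' setE := by
  have h_quarter_image : (fun x : ℝ => x / 4) '' setE = (4 : ℝ)⁻¹ • setE := by
    simp only [div_eq_inv_mul, ← smul_eq_mul, image_smul]
  have h_upper : (fun x : ℝ => x / 4 + 1 / 2) '' setE ∪ (fun x : ℝ => x / 2 + 1 / 2) '' setE
      = Icc (1 / 2) 1 := by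
    rw [← image_half_add_half_smul, ← image_union, union_comm,
      ← Icc_zero_one_eq_setE_union_half_smul_setE, image_half_add_half_Icc_zero_one]
  refine ⟨Icc_zero_one_eq_setE_union_half_smul_setE, setE_eq_quarter_smul_setE_union_Icc, ?_⟩
  rw [union_assoc, h_quarter_image, h_upper]
  exact setE_eq_quarter_smul_setE_union_Icc
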